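/- arXiv:cs/0602049 — 5 statements merged into one kernel-verified Lean document; each statement's English description precedes it below -/
import Mathlib

section
/- There is no uniformly dominant finite set of waiting fractions for the DDF protocol: for any N ≥ 1 and any fractions 0 < f_1 < ... < f_N < 1 with f_1 ≥ 1/2, there exist fractions 0 < g_1 < ... < g_N < 1 with g_1 ≥ 1/2 and a multiplexing gain r ∈ (0,1) such that d_g(r) > d_f(r), where d_f and d_g are the diversity functions d(r) = min_{j : f_j ≥ r} [(1-r)/f_j + (1 - r/f_{j-1})^+] associated to each fraction set (with f_0 = 0, f_{N+1} = 1). -/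
/-- Segment-j diversity exponent for DDF with waiting fractions `f`
(the j = 1 term omits the `(1 - r/f 0)^+` part). -/
noncomputable def dTerm (f : ℕ → ℝ) (j : ℕ) (r : ℝ) : ℝ :=
  (1 - r) / f j + if j = 1 then 0 else max (1 - r / f (j - 1)) 0

/-- Diversity gain: minimum of the segment exponents over j with f j ≥ r. -/
noncomputable def dFun (N : ℕ) (f : ℕ → ℝ) (r : ℝ) : ℝ :=
  sInf {x | ∃ j, 1 ≤ j ∧ j ≤ N + 1 ∧ r ≤ f j ∧ x = dTerm f j r}

/-- No uniformly dominant finite fraction set exists: any admissible `f` is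
strictly beaten at some multiplexing gain r by another admissible `g`. -/
theorem stmt_4 (N : ℕ) (hN : 1 ≤ N) (f : ℕ → ℝ)
    (hf0 : f 0 = 0) (hfend : f (N + 1) = 1)
    (hmono : ∀ i j, i < j → j ≤ N + 1 → f i < f j)
    (hf1 : 1 / 2 ≤ f 1) :
    ∃ g : ℕ → ℝ, g 0 = 0 ∧ g (N + 1) = 1 ∧
      (∀ i j, i < j → j ≤ N + 1 → g i < g j) ∧ 1 / 2 ≤ g 1 ∧
      ∃ r ∈ Set.Ioo (0 : ℝ) 1, dFun N g r > dFun N f r := by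
  classical
  have hfN1 : f N < 1 := hfend ▸ hmono N (N + 1) (by omega) le_rfl
  have hfN0 : 0 < f N := hf0 ▸ hmono 0 N (by omega) (by omega)
  set r : ℝ := (f N + 1) / 2 with hr
  have hrN : f N < r := by rw [hr]; linarith
  have hr1 : r < 1 := by rw [hr]; linarith
  have hr0 : 0 < r := by rw [hr]; linarith
  set c : ℝ := (f N + 3) / 4 with hc
  have hrc : r < c := by rw [hr, hc]; linarith
  have hc1 : c < 1 := by rw [hc]; linarith
  have hNc : f N < c := by rw [hc]; linarith
  set g : ℕ → ℝ := fun j => if j = N then c else f j with hg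
  have hgN : g N = c := by simp [hg]
  have hgj : ∀ j, j ≠ N → g j = f j := by intro j hj; simp [hg, hj]
  have hgend : g (N + 1) = 1 := by rw [hgj (N + 1) (by omega), hfend]
  refine ⟨g, ?_, hgend, ?_, ?_, r, ⟨hr0, hr1⟩, ?_⟩
  · rw [hgj 0 (by omega), hf0]
  · intro i j hij hjN
    by_cases hi : i = N
    · have hj : j = N + 1 := by omega
      rw [hi, hj, hgN, hgend]; exact hc1
    · by_cases hj : j = N
      · rw [hgj i hi, hj, hgN]
        exact lt_trans (hmono i N (by omega) (by omega)) hNc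
      · rw [hgj i hi, hgj j hj]; exact hmono i j hij hjN
  · by_cases h1 : 1 = N
    · subst h1
      rw [hgN, hc]; linarith
    · rw [hgj 1 (Ne.symm (by omega))]; exact hf1
  · -- main inequality
    have hdf : dFun N f r = 1 - r := by
      have hSf : {x | ∃ j, 1 ≤ j ∧ j ≤ N + 1 ∧ r ≤ f j ∧ x = dTerm f j r}
          = {1 - r} := by
        ext x
        simp only [Set.mem_setOf_eq, Set.mem_singleton_iff]
        constructor
        · rintro ⟨j, hj1, hj2, hjr, rfl⟩
          have hjN : j = N + 1 := by
            by_contra h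
            have hjle : j ≤ N := by omega
            have : f j < r := by
              rcases eq_or_lt_of_le hjle with h' | h'
              · rw [h']; exact hrN
              · exact lt_trans (hmono j N h' (by omega)) hrN
            linarith
          subst hjN
          have hmax : max (1 - r / f ((N + 1) - 1)) 0 = 0 := by
            have h1 : (1 : ℝ) ≤ r / f N := (one_le_div hfN0).mpr hrN.le
            simp only [Nat.add_sub_cancel]
            exact max_eq_right (by linarith)
          rw [dTerm, if_neg (by omega), hmax, hfend]
          ring
        · rintro rfl
          refine ⟨N + 1, by omega, le_rfl, by rw [hfend]; exact hr1.le, ?_⟩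
          have hmax : max (1 - r / f ((N + 1) - 1)) 0 = 0 := by
            have h1 : (1 : ℝ) ≤ r / f N := (one_le_div hfN0).mpr hrN.le
            simp only [Nat.add_sub_cancel]
            exact max_eq_right (by linarith)
          rw [dTerm, if_neg (by omega), hmax, hfend]
          ring
      rw [dFun, hSf, csInf_singleton]
    rw [hdf]
    set b : ℝ := min ((1 - r) / c) (2 - r - r / c) with hb
    have hbr : 1 - r < b := by
      apply lt_min
      · rw [lt_div_iff₀ (by linarith : (0:ℝ) < c)]
        nlinarith
      · have : r / c < 1 := (div_lt_one (by linarith)).mpr hrc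
        linarith
    have hlb : ∀ x ∈ {x | ∃ j, 1 ≤ j ∧ j ≤ N + 1 ∧ r ≤ g j ∧ x = dTerm g j r},
        b ≤ x := by
      rintro x ⟨j, hj1, hj2, hjr, rfl⟩
      by_cases hj : j = N + 1
      · subst hj
        have hmax : 1 - r / g ((N + 1) - 1) ≤ max (1 - r / g ((N + 1) - 1)) 0 :=
          le_max_left _ _
        rw [dTerm, if_neg (by omega), hgend]
        simp only [Nat.add_sub_cancel, hgN] at hmax ⊢
        have hrcdiv : r / c < 1 := (div_lt_one (by linarith)).mpr hrc
        calc b ≤ 2 - r - r / c := min_le_right _ _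
          _ = (1 - r) / 1 + (1 - r / c) := by ring
          _ ≤ (1 - r) / 1 + max (1 - r / c) 0 := by
              gcongr <;> exact le_max_left _ _
      · have hjle : j ≤ N := by omega
        have hgjc : g j ≤ c := by
          by_cases h' : j = N
          · rw [h', hgN]
          · rw [hgj j h']
            have : f j < f N := hmono j N (by omega) (by omega)
            linarith
        have hgj0 : 0 < g j := lt_of_lt_of_le hr0 hjr
        have h1 : (1 - r) / c ≤ (1 - r) / g j :=
          div_le_div_of_nonneg_left (by linarith) hgj0 hgjc
        have h2 : (0 : ℝ) ≤ if j = 1 then 0 else max (1 - r / g (j - 1)) 0 := by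
          split
          · exact le_rfl
          · exact le_max_right _ _
        calc b ≤ (1 - r) / c := min_le_left _ _
          _ ≤ (1 - r) / g j := h1
          _ ≤ dTerm g j r := by rw [dTerm]; linarith
    have hne : {x | ∃ j, 1 ≤ j ∧ j ≤ N + 1 ∧ r ≤ g j ∧ x = dTerm g j r}.Nonempty :=
      ⟨dTerm g (N + 1) r, N + 1, by omega, le_rfl, by rw [hgend]; exact hr1.le, rfl⟩
    have : b ≤ dFun N g r := le_csInf hne hlb
    linarith
end

section
/- Let N ≥ 1 and let f_1 = 1/2, f_j = (1 - f_{j-1})/(2 - (1 + 1/f_N) f_{j-1}) for 1 < j ≤ N define Pareto-optimal fractions with 1/2 ≤ f_j < f_{j+1} < 1. Then the resulting diversity function satisfies d^p(r) = 1 - r + (1 - r/f_N)^+ for all r ∈ [0,1], where d^p(r) = min over j ∈ {1,...,N+1} with f_j ≥ r of [(1-r)/f_j + (1 - r/f_{j-1})^+] (with f_0 = 0 giving first term (1-r)/f_1, and f_{N+1} = 1). -/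
section Segment

variable {p q r c : ℝ}

theorem two_sub_mul_le_div_of_le (hmeet : (1 - p) / q = 2 - c * p)
    (hslope : 1 / q ≤ c) (hpr : p ≤ r) : 2 - c * r ≤ (1 - r) / q :=
  calc 2 - c * r = (2 - c * p) - (r - p) * c := by ring
    _ ≤ (1 - p) / q - (r - p) * (1 / q) := by
      rw [hmeet]; gcongr
    _ = (1 - r) / q := by ring

theorem two_sub_mul_le_div_add_of_le (hp : 0 < p) (hmeet : (1 - p) / q = 2 - c * p)
    (hslope : c ≤ 1 / q + 1 / p) (hrp : r ≤ p) : 2 - c * r ≤ (1 - r) / q + (1 - r / p) :=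
  calc 2 - c * r = (2 - c * p) + (p - r) * c := by ring
    _ ≤ (1 - p) / q + (p - r) * (1 / q + 1 / p) := by
      rw [hmeet]; gcongr
    _ = (1 - r) / q + (1 - r / p) := by field_simp; ring

theorem two_sub_mul_le_div_add_max (hp : 0 < p) (hmeet : (1 - p) / q = 2 - c * p)
    (hslope_right : 1 / q ≤ c) (hslope_left : c ≤ 1 / q + 1 / p) : 2 - c * r ≤ (1 - r) / q + max (1 - r / p) 0 := by
  rcases le_total r p with hrp | hpr
  · exact (two_sub_mul_le_div_add_of_le hp hmeet hslope_left hrp).trans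
      (by gcongr; exact le_max_left _ _)
  · linarith [two_sub_mul_le_div_of_le hmeet hslope_right hpr, le_max_right (1 - r / p) 0]

theorem one_div_le_one_add_one_div {g : ℝ} (hq : 1 / 2 ≤ q) (hg : 0 < g) (hg1 : g ≤ 1) :
    1 / q ≤ 1 + 1 / g := by
  have h2 : 1 / q ≤ 2 := by rw [div_le_iff₀ (by linarith)]; linarith
  have h1 : 1 ≤ 1 / g := by rw [le_div_iff₀ hg]; linarith
  linarith

theorem one_add_one_div_le_add {g : ℝ} (hp : 0 < p) (hpg : p ≤ g) (hq : 0 < q) (hq1 : q ≤ 1) :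
    1 + 1 / g ≤ 1 / q + 1 / p := by
  have h1 : 1 ≤ 1 / q := by rw [le_div_iff₀ hq]; linarith
  linarith [one_div_le_one_div_of_le hp hpg]

theorem one_sub_add_max_eq_two_sub_mul {g : ℝ} (hg : 0 < g) (hrg : r ≤ g) :
    1 - r + max (1 - r / g) 0 = 2 - (1 + 1 / g) * r := by
  rw [max_eq_left (sub_nonneg.2 ((div_le_one hg).2 hrg))]
  ring

end Segment

section Pareto

variable {N : ℕ} {f : ℕ → ℝ}

theorem strictMonoOn_Icc_of_lt_succ (hlt : ∀ j, 1 ≤ j → j ≤ N → f j < f (j + 1)) :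
    StrictMonoOn f (Set.Icc 1 (N + 1)) :=
  strictMonoOn_of_lt_succ Set.ordConnected_Icc fun j _ hj hsj => by
    rw [Order.succ_eq_add_one, Set.mem_Icc] at *
    exact hlt j hj.1 (by omega)

theorem le_of_lt_succ_of_le (hlt : ∀ j, 1 ≤ j → j ≤ N → f j < f (j + 1)) {i k : ℕ}
    (hi : 1 ≤ i) (hik : i ≤ k) (hk : k ≤ N + 1) : f i ≤ f k :=
  (strictMonoOn_Icc_of_lt_succ hlt).monotoneOn ⟨hi, hik.trans hk⟩ ⟨hi.trans hik, hk⟩ hik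

theorem two_sub_mul_le_dTerm (hf1 : f 1 = 1 / 2) (hfend : f (N + 1) = 1)
    (hrec : ∀ j, 1 < j → j ≤ N →
      f j = (1 - f (j - 1)) / (2 - (1 + 1 / f N) * f (j - 1)))
    (hbnd : ∀ j, 1 ≤ j → j ≤ N → 1 / 2 ≤ f j ∧ f j < f (j + 1))
    {j : ℕ} (hj : 1 ≤ j) (hjN : j ≤ N) {r : ℝ} (hr0 : 0 ≤ r) :
    2 - (1 + 1 / f N) * r ≤ dTerm f j r := by
  have hle_fN : ∀ i, 1 ≤ i → i ≤ N → f i ≤ f N := fun i hi hiN =>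
    le_of_lt_succ_of_le (fun k hk hkN => (hbnd k hk hkN).2) hi hiN (by omega)
  have hfN : 0 < f N := by linarith [(hbnd N (hj.trans hjN) le_rfl).1]
  have hfN_lt : f N < 1 := hfend ▸ (hbnd N (hj.trans hjN) le_rfl).2
  obtain rfl | ⟨i, hi, rfl⟩ : j = 1 ∨ ∃ i, 1 ≤ i ∧ j = i + 1 :=
    (eq_or_lt_of_le hj).imp Eq.symm fun h => ⟨j - 1, by omega, by omega⟩
  · simp only [dTerm, ↓reduceIte, add_zero]
    exact two_sub_mul_le_div_of_le (p := 0) (by norm_num [hf1])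
      (one_div_le_one_add_one_div hf1.ge hfN hfN_lt.le) hr0
  · have hp : 0 < f i := by linarith [(hbnd i hi (by omega)).1]
    have hpN := hle_fN i hi (by omega)
    have hqN := hle_fN (i + 1) hj hjN
    have hmeet : (1 - f i) / f (i + 1) = 2 - (1 + 1 / f N) * f i := by
      rw [hrec (i + 1) (by omega) hjN, Nat.add_sub_cancel, div_div_cancel₀ (by linarith)]
    simp only [dTerm, if_neg (by omega : i + 1 ≠ 1), Nat.add_sub_cancel]
    exact two_sub_mul_le_div_add_max hp hmeet
      (one_div_le_one_add_one_div (hbnd (i + 1) hj hjN).1 hfN hfN_lt.le)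
      (one_add_one_div_le_add hp hpN (by linarith [(hbnd (i + 1) hj hjN).1]) (by linarith))

end Pareto

theorem stmt_6_general (N : ℕ) (hN : 1 ≤ N) (f : ℕ → ℝ)
    (hf1 : f 1 = 1 / 2) (hfend : f (N + 1) = 1)
    (hrec : ∀ j, 1 < j → j ≤ N →
      f j = (1 - f (j - 1)) / (2 - (1 + 1 / f N) * f (j - 1)))
    (hbnd : ∀ j, 1 ≤ j → j ≤ N → 1 / 2 ≤ f j ∧ f j < f (j + 1)) :
    ∀ r ∈ Set.Icc (0 : ℝ) 1,
      dFun N f r = 1 - r + max (1 - r / f N) 0 := by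
  rintro r ⟨hr0, hr1⟩
  have hlast : dTerm f (N + 1) r = 1 - r + max (1 - r / f N) 0 := by
    simp [dTerm, hfend, show N ≠ 0 by omega]
  refine IsLeast.csInf_eq ⟨⟨N + 1, by omega, le_rfl, hfend ▸ hr1, hlast.symm⟩, ?_⟩
  rintro _ ⟨j, hj, hjN, hrj, rfl⟩
  rcases hjN.eq_or_lt with rfl | hjN
  · exact hlast.ge
  have hjN : j ≤ N := by omega
  have hfN : 0 < f N := by linarith [(hbnd N hN le_rfl).1]
  have hrN : r ≤ f N :=
    hrj.trans (le_of_lt_succ_of_le (fun k hk hkN => (hbnd k hk hkN).2) hj hjN (by omega))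
  rw [one_sub_add_max_eq_two_sub_mul hfN hrN]
  exact two_sub_mul_le_dTerm hf1 hfend hrec hbnd hj hjN hr0

/-- The Pareto-optimal fractions achieve d^p(r) = 1 - r + (1 - r/f N)^+. -/
theorem stmt_6 (N : ℕ) (hN : 1 ≤ N) (f : ℕ → ℝ)
    (hf0 : f 0 = 0) (hf1 : f 1 = 1 / 2) (hfend : f (N + 1) = 1)
    (hrec : ∀ j, 1 < j → j ≤ N →
      f j = (1 - f (j - 1)) / (2 - (1 + 1 / f N) * f (j - 1)))
    (hbnd : ∀ j, 1 ≤ j → j ≤ N → 1 / 2 ≤ f j ∧ f j < f (j + 1))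
    (hlast : f N < 1) :
    ∀ r ∈ Set.Icc (0 : ℝ) 1,
      dFun N f r = 1 - r + max (1 - r / f N) 0 :=
  stmt_6_general N hN f hf1 hfend hrec hbnd
end

section
/- For the Pareto-optimal DDF fractions with f_1 = 1/2, ..., f_N defined by the recursion f_j = (1 - f_{j-1})/(2 - (1+1/f_N) f_{j-1}), the following holds for every j with 1 ≤ j ≤ N: d_{N+1}(f_{j-1}) = d_j(f_{j-1}) = (1 - f_{j-1})/f_j, where d_j(r) = (1-r)/f_j + (1 - r/f_{j-1})^+ and d_{N+1}(r) = (1-r) + (1 - r/f_N)^+ (with f_{N+1} = 1, f_0 = 0). -/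
/-- At the break points f_{j-1}, the last segment exponent matches the
segment-j exponent: d_{N+1}(f_{j-1}) = d_j(f_{j-1}) = (1 - f_{j-1})/f_j. -/
theorem stmt_7 (N : ℕ) (hN : 1 ≤ N) (f : ℕ → ℝ)
    (hf0 : f 0 = 0) (hf1 : f 1 = 1 / 2) (hfend : f (N + 1) = 1)
    (hrec : ∀ j, 1 < j → j ≤ N →
      f j = (1 - f (j - 1)) / (2 - (1 + 1 / f N) * f (j - 1)))
    (hbnd : ∀ j, 1 ≤ j → j ≤ N → 1 / 2 ≤ f j ∧ f j < f (j + 1))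
    (hlast : f N < 1) :
    ∀ j, 1 ≤ j → j ≤ N →
      dTerm f (N + 1) (f (j - 1)) = dTerm f j (f (j - 1)) ∧
      dTerm f j (f (j - 1)) = (1 - f (j - 1)) / f j := by
  have mono : ∀ b, b ≤ N → ∀ a, 1 ≤ a → a ≤ b → f a ≤ f b := by
    intro b
    induction b with
    | zero => intro _ a ha hab; omega
    | succ b ih =>
      intro hb a ha hab
      rcases Nat.lt_or_ge a (b + 1) with h | h
      · have h1 : f a ≤ f b := ih (by omega) a ha (by omega)
        have h2 : f b < f (b + 1) := (hbnd b (by omega) (by omega)).2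
        linarith
      · have : a = b + 1 := by omega
        simp [this]
  intro j hj hjN
  have hNne : N + 1 ≠ 1 := by omega
  rcases eq_or_lt_of_le hj with hj1 | hj2
  · -- j = 1
    subst hj1
    simp only [dTerm, hNne, if_false, if_true, Nat.add_sub_cancel]
    rw [hf0, hf1, hfend]
    norm_num
  · -- j ≥ 2
    set r := f (j - 1) with hr
    have hjm1 : 1 ≤ j - 1 := by omega
    have hjm1N : j - 1 ≤ N := by omega
    have hrhalf : 1 / 2 ≤ r := (hbnd (j - 1) hjm1 hjm1N).1
    have hrpos : 0 < r := by linarith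
    have hstep : r < f j := by
      have := (hbnd (j - 1) hjm1 hjm1N).2
      have hji : j - 1 + 1 = j := by omega
      rwa [hji] at this
    have hfjN : f j ≤ f N := mono N le_rfl j hj hjN
    have hrN : r < f N := lt_of_lt_of_le hstep hfjN
    have hfNpos : 0 < f N := by linarith
    have hfjpos : 0 < f j := by linarith
    have hr1 : r < 1 := lt_trans hrN hlast
    have hrdiv : r / f N < 1 := (div_lt_one hfNpos).2 hrN
    have hD : 0 < 2 - (1 + 1 / f N) * r := by
      have : (1 + 1 / f N) * r = r + r / f N := by ring
      linarith
    have hrecj := hrec j hj2 hjN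
    rw [← hr] at hrecj
    have hmul : f j * (2 - (1 + 1 / f N) * r) = 1 - r := by
      rw [hrecj, div_mul_cancel₀ _ (ne_of_gt hD)]
    have hkey : (1 - r) / f j = 2 - (1 + 1 / f N) * r := by
      rw [div_eq_iff (ne_of_gt hfjpos)]
      linarith [hmul]
    have hjne : j ≠ 1 := by omega
    have hd1 : dTerm f j r = (1 - r) / f j := by
      simp only [dTerm, hjne, if_false, ← hr]
      rw [div_self (ne_of_gt hrpos)]
      norm_num
    have hd2 : dTerm f (N + 1) r = (1 - r) / f j := by
      simp only [dTerm, hNne, if_false, Nat.add_sub_cancel, hfend]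
      rw [max_eq_left (by linarith), hkey]
      field_simp
      ring
    exact ⟨by rw [hd1, hd2], hd1⟩
end

section
/- No fraction set Pareto-dominates the Pareto-optimal DDF fractions: let {f_j^p}_{j=1}^N with f_1^p = 1/2 and the recursion f_j^p = (1 - f_{j-1}^p)/(2 - (1 + 1/f_N^p) f_{j-1}^p), yielding d^p(r) = 1 - r + (1 - r/f_N^p)^+. Then for any other strictly increasing fractions 0 = f_0 < f_1 < ... < f_N < f_{N+1} = 1 with f_1 ≥ 1/2 and associated d(r) = min_{j : f_j ≥ r} [(1-r)/f_j + (1 - r/f_{j-1})^+], if there exists r_0 with d(r_0) > d^p(r_0) then there also exists r_1 with d(r_1) < d^p(r_1). -/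
lemma dFun_le (N : ℕ) (f : ℕ → ℝ)
    (hpos : ∀ k, 1 ≤ k → k ≤ N + 1 → 0 < f k)
    (r : ℝ) (hr : r ≤ 1) (j : ℕ) (h1 : 1 ≤ j) (h2 : j ≤ N + 1)
    (hrf : r ≤ f j) : dFun N f r ≤ dTerm f j r := by
  apply csInf_le
  · refine ⟨0, ?_⟩
    rintro x ⟨k, hk1, hk2, hkr, rfl⟩
    have hk := hpos k hk1 hk2
    have h1r : 0 ≤ 1 - r := by linarith
    have hd : 0 ≤ (1 - r) / f k := div_nonneg h1r hk.le
    have hi : (0:ℝ) ≤ if k = 1 then 0 else max (1 - r / f (k - 1)) 0 := by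
      split
      · exact le_refl 0
      · exact le_max_right _ _
    unfold dTerm
    linarith
  · exact ⟨j, h1, h2, hrf, rfl⟩

set_option maxHeartbeats 1000000 in
/-- No fraction set Pareto-dominates the Pareto-optimal DDF fractions: if some
`f` beats d^p(r) = 1 - r + (1 - r/fp N)^+ at some r₀, it loses at some r₁. -/
theorem stmt_9 (N : ℕ) (hN : 1 ≤ N) (fp : ℕ → ℝ)
    (hfp0 : fp 0 = 0) (hfp1 : fp 1 = 1 / 2) (hfpend : fp (N + 1) = 1)
    (hrec : ∀ j, 1 < j → j ≤ N →
      fp j = (1 - fp (j - 1)) / (2 - (1 + 1 / fp N) * fp (j - 1)))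
    (hbndp : ∀ j, 1 ≤ j → j ≤ N → 1 / 2 ≤ fp j ∧ fp j < fp (j + 1))
    (hlastp : fp N < 1)
    (f : ℕ → ℝ)
    (hf0 : f 0 = 0) (hfend : f (N + 1) = 1)
    (hmono : ∀ i j, i < j → j ≤ N + 1 → f i < f j)
    (hf1 : 1 / 2 ≤ f 1) :
    (∃ r₀ ∈ Set.Icc (0 : ℝ) 1,
        dFun N f r₀ > 1 - r₀ + max (1 - r₀ / fp N) 0) →
      ∃ r₁ ∈ Set.Icc (0 : ℝ) 1,
        dFun N f r₁ < 1 - r₁ + max (1 - r₁ / fp N) 0 := by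
  rintro ⟨r₀, hr₀, hgt⟩
  by_contra hcon
  push_neg at hcon
  -- basic positivity facts
  have fpos : ∀ k, 1 ≤ k → k ≤ N + 1 → 0 < f k := by
    intro k h1 h2
    have := hmono 0 k h1 h2
    linarith [hf0 ▸ this]
  have hfpN : 1 / 2 ≤ fp N := (hbndp N hN le_rfl).1
  have hfpNpos : 0 < fp N := by linarith
  -- fp is monotone up to N
  have hchain : ∀ k j, 1 ≤ j → j + k ≤ N → fp j ≤ fp (j + k) := by
    intro k
    induction k with
    | zero => intro j _ _; exact le_rfl
    | succ k ih =>
      intro j h1 h2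
      have h3 : j + k ≤ N := by omega
      have := (hbndp (j + k) (by omega) h3).2
      have := ih j h1 h3
      have : fp j ≤ fp (j + k + 1) := by linarith
      exact this
  have hfpchain : ∀ j, 1 ≤ j → j ≤ N → fp j ≤ fp N := by
    intro j h1 h2
    have := hchain (N - j) j h1 (by omega)
    rwa [Nat.add_sub_cancel' h2] at this
  -- Part 1 : from hgt derive fp N < f N
  have hfNpos : 0 < f N := fpos N hN (by omega)
  have hNlt : fp N < f N := by
    have hdle := dFun_le N f fpos r₀ hr₀.2 (N + 1) (by omega) le_rfl
      (by rw [hfend]; exact hr₀.2)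
    have hterm : dTerm f (N + 1) r₀ = 1 - r₀ + max (1 - r₀ / f N) 0 := by
      unfold dTerm
      rw [if_neg (by omega), hfend, Nat.add_sub_cancel]
      ring
    rw [hterm] at hdle
    have hmaxlt : max (1 - r₀ / fp N) 0 < max (1 - r₀ / f N) 0 := by linarith
    have hpos2 : 0 < max (1 - r₀ / f N) 0 := lt_of_le_of_lt (le_max_right _ _) hmaxlt
    have hmx : max (1 - r₀ / f N) 0 = 1 - r₀ / f N := by
      rcases max_cases (1 - r₀ / f N) (0:ℝ) with ⟨h,_⟩ | ⟨h,_⟩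
      · exact h
      · exfalso; rw [h] at hpos2; exact lt_irrefl 0 hpos2
    have hlt : r₀ / f N < r₀ / fp N := by
      have := le_max_left (1 - r₀ / fp N) (0:ℝ)
      rw [hmx] at hmaxlt
      linarith
    have hr0pos : 0 < r₀ := by
      rcases lt_or_eq_of_le hr₀.1 with h | h
      · exact h
      · exfalso; rw [← h] at hlt; simp at hlt
    rw [div_lt_div_iff₀ hfNpos hfpNpos] at hlt
    nlinarith
  -- Part 2 : from hcon derive f N ≤ fp N
  have hge := hcon
  have key : ∀ j, 1 ≤ j → j ≤ N → f j ≤ fp j := by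
    intro j hj1
    induction j, hj1 using Nat.le_induction with
    | base =>
      intro _
      have hf1pos : 0 < f 1 := fpos 1 le_rfl (by omega)
      have hdle := dFun_le N f fpos 0 zero_le_one 1 le_rfl (by omega) hf1pos.le
      have hterm : dTerm f 1 0 = 1 / f 1 := by
        unfold dTerm; rw [if_pos rfl]; ring
      rw [hterm] at hdle
      have hge0 := hge 0 ⟨le_rfl, zero_le_one⟩
      have : max (1 - 0 / fp N) (0:ℝ) = 1 := by norm_num
      rw [this] at hge0
      have h2 : (2:ℝ) ≤ 1 / f 1 := by linarith
      rw [le_div_iff₀ hf1pos] at h2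
      rw [hfp1]; linarith
    | succ j hj ih =>
      intro hjN
      have hjN' : j ≤ N := by omega
      have hx := ih hjN'
      set x := f j with hxdef
      set y := fp j with hydef
      have hxpos : 0 < x := fpos j hj (by omega)
      have hyN : y ≤ fp N := hfpchain j hj hjN'
      have hxy : x ≤ y := hx
      have hx1 : x ≤ 1 := by linarith
      have hxr : (0:ℝ) ≤ x := hxpos.le
      -- d(x) ≥ dp(x)
      have hge1 := hge x ⟨hxr, hx1⟩
      have hmaxx : max (1 - x / fp N) (0:ℝ) = 1 - x / fp N := by
        apply max_eq_left
        have : x / fp N ≤ 1 := by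
          rw [div_le_one hfpNpos]; linarith
        linarith
      rw [hmaxx] at hge1
      -- d(x) ≤ (1-x)/f (j+1)
      have hfj1pos : 0 < f (j + 1) := fpos (j + 1) (by omega) (by omega)
      have hxle : x ≤ f (j + 1) := (hmono j (j + 1) (by omega) (by omega)).le
      have hdle := dFun_le N f fpos x hx1 (j + 1) (by omega) (by omega) hxle
      have hterm : dTerm f (j + 1) x = (1 - x) / f (j + 1) := by
        unfold dTerm
        rw [if_neg (by omega), Nat.add_sub_cancel]
        have : x / f j = 1 := div_self hxpos.ne'
        rw [← hxdef, this]
        norm_num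
      rw [hterm] at hdle
      -- recursion for fp (j+1)
      have hrec1 := hrec (j + 1) (by omega) hjN
      rw [Nat.add_sub_cancel, ← hydef] at hrec1
      -- algebra
      have hDy : 0 < 2 - (1 + 1 / fp N) * y := by
        have h1 : y / fp N ≤ 1 := (div_le_one hfpNpos).mpr hyN
        have h2 : y < 1 := lt_of_le_of_lt hyN hlastp
        have h3 : y / fp N = y * (1 / fp N) := by ring
        nlinarith
      have hDx : 0 < 2 - (1 + 1 / fp N) * x := by
        have h1 : x / fp N ≤ 1 := (div_le_one hfpNpos).mpr (le_trans hxy hyN)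
        have h2 : x < 1 := by linarith [lt_of_le_of_lt hyN hlastp]
        have h3 : x / fp N = x * (1 / fp N) := by ring
        nlinarith
      have hA : f (j + 1) * (2 - (1 + 1 / fp N) * x) ≤ 1 - x := by
        have h2 : 2 - x - x / fp N ≤ (1 - x) / f (j + 1) := by linarith
        rw [le_div_iff₀ hfj1pos] at h2
        have h3 : x / fp N = x * (1 / fp N) := by ring
        nlinarith [h2]
      have hB : fp (j + 1) * (2 - (1 + 1 / fp N) * y) = 1 - y := by
        rw [hrec1, div_mul_cancel₀]
        exact hDy.ne'
      have hfp12 : 1 / 2 ≤ fp (j + 1) := (hbndp (j + 1) (by omega) hjN).1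
      have hc : (1:ℝ) < 1 / fp N := by
        rw [lt_div_iff₀ hfpNpos]; linarith
      -- conclude f (j+1) ≤ fp (j+1)
      have hP1 : (1:ℝ) ≤ fp (j + 1) * (1 + 1 / fp N) := by nlinarith
      have hprod : 0 ≤ (y - x) * (fp (j + 1) * (1 + 1 / fp N) - 1) :=
        mul_nonneg (sub_nonneg.mpr hxy) (sub_nonneg.mpr hP1)
      have hstep : 0 ≤ (fp (j + 1) - f (j + 1)) * (2 - (1 + 1 / fp N) * x) := by
        nlinarith [hA, hB, hprod]
      have := (mul_nonneg_iff_of_pos_right hDx).mp hstep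
      linarith
  have := key N hN le_rfl
  linarith
end

section
/- Given strictly increasing sequences 0 = f_0 < f_1 < ... < f_{N+1} = 1 and 0 = g_0 < g_1 < ... < g_{N+1} = 1 with {f_j} ≠ {g_j} as sets, there exist indices i, ℓ ∈ {1, ..., N+1} such that either f_{i-1} ≤ g_{ℓ-1} < g_ℓ < f_i, or f_{i-1} < g_{ℓ-1} < g_ℓ ≤ f_i. -/
/-- Interleaving fact: two distinct strictly increasing partitions of [0,1]
with the same endpoints have an interval of one strictly containing (in the
stated one-sided sense) a consecutive pair of the other. -/
theorem stmt_10 (N : ℕ) (f g : ℕ → ℝ)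
    (hf0 : f 0 = 0) (hfend : f (N + 1) = 1)
    (hg0 : g 0 = 0) (hgend : g (N + 1) = 1)
    (hfmono : ∀ i j, i < j → j ≤ N + 1 → f i < f j)
    (hgmono : ∀ i j, i < j → j ≤ N + 1 → g i < g j)
    (hne : f '' (Set.Iic (N + 1)) ≠ g '' (Set.Iic (N + 1))) :
    ∃ i ℓ, 1 ≤ i ∧ i ≤ N + 1 ∧ 1 ≤ ℓ ∧ ℓ ≤ N + 1 ∧
      ((f (i - 1) ≤ g (ℓ - 1) ∧ g (ℓ - 1) < g ℓ ∧ g ℓ < f i) ∨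
       (f (i - 1) < g (ℓ - 1) ∧ g (ℓ - 1) < g ℓ ∧ g ℓ ≤ f i)) := by
  by_contra hcon
  have hnot1 : ∀ i ℓ, 1 ≤ i → i ≤ N + 1 → 1 ≤ ℓ → ℓ ≤ N + 1 →
      f (i - 1) ≤ g (ℓ - 1) → g (ℓ - 1) < g ℓ → g ℓ < f i → False :=
    fun i ℓ h1 h2 h3 h4 a b c => hcon ⟨i, ℓ, h1, h2, h3, h4, Or.inl ⟨a, b, c⟩⟩
  have hnot2 : ∀ i ℓ, 1 ≤ i → i ≤ N + 1 → 1 ≤ ℓ → ℓ ≤ N + 1 →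
      f (i - 1) < g (ℓ - 1) → g (ℓ - 1) < g ℓ → g ℓ ≤ f i → False :=
    fun i ℓ h1 h2 h3 h4 a b c => hcon ⟨i, ℓ, h1, h2, h3, h4, Or.inr ⟨a, b, c⟩⟩
  clear hcon
  -- monotonicity helpers
  have hfle : ∀ a b, a ≤ b → b ≤ N + 1 → f a ≤ f b := by
    intro a b hab hb
    rcases eq_or_lt_of_le hab with h | h
    · exact h ▸ le_rfl
    · exact (hfmono a b h hb).le
  have hgle : ∀ a b, a ≤ b → b ≤ N + 1 → g a ≤ g b := by
    intro a b hab hb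
    rcases eq_or_lt_of_le hab with h | h
    · exact h ▸ le_rfl
    · exact (hgmono a b h hb).le
  have hfinj : Set.InjOn f ↑(Finset.Iic (N + 1)) := by
    intro a ha b hb hab
    simp only [Finset.coe_Iic, Set.mem_Iic] at ha hb
    by_contra h
    rcases Ne.lt_or_gt h with h' | h'
    · exact absurd hab (ne_of_lt (hfmono a b h' hb))
    · exact absurd hab.symm (ne_of_lt (hfmono b a h' ha))
  have hginj : Set.InjOn g ↑(Finset.Iic (N + 1)) := by
    intro a ha b hb hab
    simp only [Finset.coe_Iic, Set.mem_Iic] at ha hb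
    by_contra h
    rcases Ne.lt_or_gt h with h' | h'
    · exact absurd hab (ne_of_lt (hgmono a b h' hb))
    · exact absurd hab.symm (ne_of_lt (hgmono b a h' ha))
  set F : Finset ℝ := (Finset.Iic (N + 1)).image f with hF
  set G : Finset ℝ := (Finset.Iic (N + 1)).image g with hG
  have hFG : F ≠ G := by
    intro h
    apply hne
    rw [show (Set.Iic (N + 1) : Set ℕ) = ↑(Finset.Iic (N + 1)) from (Finset.coe_Iic _).symm,
      ← Finset.coe_image, ← Finset.coe_image, hF, hG] at *
    exact congrArg _ h
  have cardF : F.card = N + 2 := by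
    rw [hF, Finset.card_image_of_injOn hfinj, Nat.card_Iic]
  have cardG : G.card = N + 2 := by
    rw [hG, Finset.card_image_of_injOn hginj, Nat.card_Iic]
  set A : Finset ℕ := (Finset.Iic (N + 1)).filter (fun l => g l ∉ F) with hA
  set B : Finset ℕ := (Finset.Iic (N + 1)).filter (fun m => f m ∉ G) with hB
  -- cardinality of A and B
  have himgA : ((Finset.Iic (N + 1)).filter (fun l => g l ∈ F)).image g = G ∩ F := by
    ext x
    simp only [Finset.mem_image, Finset.mem_filter, Finset.mem_inter, Finset.mem_Iic, hG]
    constructor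
    · rintro ⟨l, ⟨hl, hlF⟩, rfl⟩
      exact ⟨⟨l, hl, rfl⟩, hlF⟩
    · rintro ⟨⟨l, hl, rfl⟩, hxF⟩
      exact ⟨l, ⟨hl, hxF⟩, rfl⟩
  have himgB : ((Finset.Iic (N + 1)).filter (fun m => f m ∈ G)).image f = F ∩ G := by
    ext x
    simp only [Finset.mem_image, Finset.mem_filter, Finset.mem_inter, Finset.mem_Iic, hF]
    constructor
    · rintro ⟨l, ⟨hl, hlF⟩, rfl⟩
      exact ⟨⟨l, hl, rfl⟩, hlF⟩
    · rintro ⟨⟨l, hl, rfl⟩, hxF⟩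
      exact ⟨l, ⟨hl, hxF⟩, rfl⟩
  have cardA : A.card + (G ∩ F).card = N + 2 := by
    rw [← himgA, Finset.card_image_of_injOn (hginj.mono (by
      intro x hx; simp only [Finset.coe_filter, Set.mem_setOf_eq] at hx
      simpa using hx.1))]
    have h2 := Finset.card_filter_add_card_filter_not
      (s := Finset.Iic (N + 1)) (p := fun l => g l ∈ F)
    have h3 : (Finset.Iic (N + 1)).filter (fun a => ¬ g a ∈ F) = A := rfl
    rw [Nat.card_Iic, h3] at h2
    omega
  have cardB : B.card + (F ∩ G).card = N + 2 := by
    rw [← himgB, Finset.card_image_of_injOn (hfinj.mono (by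
      intro x hx; simp only [Finset.coe_filter, Set.mem_setOf_eq] at hx
      simpa using hx.1))]
    have h2 := Finset.card_filter_add_card_filter_not
      (s := Finset.Iic (N + 1)) (p := fun m => f m ∈ G)
    have h3 : (Finset.Iic (N + 1)).filter (fun a => ¬ f a ∈ G) = B := rfl
    rw [Nat.card_Iic, h3] at h2
    omega
  have cardAB : A.card = B.card := by rw [Finset.inter_comm] at cardA; omega
  -- A is nonempty
  have hAne : A.Nonempty := by
    rw [Finset.nonempty_iff_ne_empty]
    intro h
    apply hFG
    have hsub : G ⊆ F := by
      intro x hx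
      rw [hG, Finset.mem_image] at hx
      obtain ⟨l, hl, rfl⟩ := hx
      by_contra hxF
      have : l ∈ A := Finset.mem_filter.2 ⟨hl, hxF⟩
      simp [h] at this
    exact (Finset.eq_of_subset_of_card_le hsub (by omega)).symm
  -- key construction
  have key : ∀ l ∈ A, ∃ i, 1 ≤ i ∧ i ≤ N + 1 ∧ f (i-1) < g l ∧ g l < f i ∧ f (i-1) ∉ G ∧ f i ∉ G := by
    intro l hlA
    rw [hA, Finset.mem_filter, Finset.mem_Iic] at hlA
    obtain ⟨hlN1, hlF⟩ := hlA
    have hmemF : ∀ m, m ≤ N+1 → f m ∈ F := fun m hm =>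
      Finset.mem_image.2 ⟨m, Finset.mem_Iic.2 hm, rfl⟩
    have hl1 : 1 ≤ l := by
      rcases Nat.eq_zero_or_pos l with h | h
      · exact absurd (by rw [h, hg0, ← hf0]; exact hmemF 0 (by omega)) hlF
      · exact h
    have hlN : l ≤ N := by
      by_contra hh
      have hln : l = N+1 := by omega
      exact hlF (by rw [hln, hgend, ← hfend]; exact hmemF (N+1) le_rfl)
    have hgl1 : g l < 1 := by
      have := hgmono l (N+1) (by omega) le_rfl
      rwa [hgend] at this
    have hgl0 : (0:ℝ) < g l := by
      have := hgmono 0 l (by omega) (by omega)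
      rwa [hg0] at this
    have hex : ∃ i, g l < f i := ⟨N+1, by rw [hfend]; exact hgl1⟩
    set i := Nat.find hex with hi
    have hfi : g l < f i := Nat.find_spec hex
    have hiN : i ≤ N + 1 := Nat.find_min' hex (by rw [hfend]; exact hgl1)
    have hi1 : 1 ≤ i := by
      rcases Nat.eq_zero_or_pos i with h | h
      · rw [h, hf0] at hfi; linarith
      · exact h
    have hfim : f (i-1) ≤ g l := le_of_not_gt (Nat.find_min hex (by omega))
    have hfilt : f (i-1) < g l :=
      lt_of_le_of_ne hfim (fun h => hlF (h ▸ hmemF (i-1) (by omega)))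
    have hgll : g (l-1) < g l := hgmono (l-1) l (by omega) (by omega)
    have hgl1f : g (l-1) < f (i-1) := by
      by_contra h
      push_neg at h
      exact hnot1 i l hi1 hiN hl1 (by omega) h hgll hfi
    have hfi1G : f (i-1) ∉ G := by
      rw [hG]
      intro hmem
      rw [Finset.mem_image] at hmem
      obtain ⟨m, hm, hfm⟩ := hmem
      rw [Finset.mem_Iic] at hm
      have h1 : g m < g l := by rw [hfm]; exact hfilt
      have h2 : m < l := by
        by_contra hh
        push_neg at hh
        exact absurd h1 (not_lt.2 (hgle l m hh hm))
      have h3 : g m ≤ g (l-1) := hgle m (l-1) (by omega) (by omega)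
      rw [hfm] at h3
      linarith
    have hgll2 : g l < g (l+1) := hgmono l (l+1) (by omega) (by omega)
    have hfig : f i < g (l+1) := by
      by_contra h
      push_neg at h
      have e1 : f (i-1) < g (l+1-1) := by simpa using hfilt
      have e2 : g (l+1-1) < g (l+1) := by simpa using hgll2
      exact hnot2 i (l+1) hi1 hiN (by omega) (by omega) e1 e2 h
    have hfiG : f i ∉ G := by
      rw [hG]
      intro hmem
      rw [Finset.mem_image] at hmem
      obtain ⟨m, hm, hfm⟩ := hmem
      rw [Finset.mem_Iic] at hm
      have h1 : g l < g m := by rw [hfm]; exact hfi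
      have h2 : l < m := by
        by_contra hh
        push_neg at hh
        exact absurd h1 (not_lt.2 (hgle m l hh hlN1))
      have h3 : g (l+1) ≤ g m := hgle (l+1) m (by omega) hm
      rw [hfm] at h3
      linarith
    exact ⟨i, hi1, hiN, hfilt, hfi, hfi1G, hfiG⟩
  have swap : ∀ a b i, a ∈ A → b ∈ A → a < b → 1 ≤ i → i ≤ N+1 →
      f (i-1) < g a → g a < f i → f (i-1) < g b → g b < f i → False := by
    intro a b i haA hbA hab hi1 hiN hfa hga hfb hgb
    have hbN : b ≤ N+1 := Finset.mem_Iic.1 (Finset.mem_filter.1 hbA).1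
    have haN : a ≤ N+1 := Finset.mem_Iic.1 (Finset.mem_filter.1 haA).1
    have hb1 : 1 ≤ b := by omega
    have h1 : g a ≤ g (b-1) := hgle a (b-1) (by omega) (by omega)
    exact hnot1 i b hi1 hiN hb1 hbN (le_of_lt (lt_of_lt_of_le hfa h1))
      (hgmono (b-1) b (by omega) (by omega)) hgb
  have key' : ∀ l, ∃ i, l ∈ A →
      (1 ≤ i ∧ i ≤ N+1 ∧ f (i-1) < g l ∧ g l < f i ∧ f (i-1) ∉ G ∧ f i ∉ G) := by
    intro l
    by_cases h : l ∈ A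
    · obtain ⟨i, hi⟩ := key l h
      exact ⟨i, fun _ => hi⟩
    · exact ⟨0, fun h' => absurd h' h⟩
  choose φ hφ using key'
  set J := A.image φ with hJ
  have hJcard : J.card = A.card := Finset.card_image_of_injOn (by
    intro a ha b hb hab
    rw [Finset.mem_coe] at ha hb
    obtain ⟨pa1, paN, pfa, pga, -, -⟩ := hφ a ha
    obtain ⟨pb1, pbN, pfb, pgb, -, -⟩ := hφ b hb
    rw [← hab] at pfb pgb
    by_contra hne'
    rcases Ne.lt_or_gt hne' with h | h
    · exact swap a b (φ a) ha hb h pa1 paN pfa pga pfb pgb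
    · exact swap b a (φ a) hb ha h pa1 paN pfb pgb pfa pga)
  have hJprops : ∀ i ∈ J, 1 ≤ i ∧ i ≤ N+1 ∧ f (i-1) ∉ G ∧ f i ∉ G := by
    intro i hi
    rw [hJ, Finset.mem_image] at hi
    obtain ⟨l, hl, rfl⟩ := hi
    obtain ⟨h1, h2, -, -, h5, h6⟩ := hφ l hl
    exact ⟨h1, h2, h5, h6⟩
  set K := J ∪ J.image (· - 1) with hK
  have hKB : K ⊆ B := by
    intro m hm
    rw [hK, Finset.mem_union] at hm
    rcases hm with h | h
    · obtain ⟨h1, h2, h3, h4⟩ := hJprops m h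
      exact Finset.mem_filter.2 ⟨Finset.mem_Iic.2 h2, h4⟩
    · rw [Finset.mem_image] at h
      obtain ⟨i, hiJ, rfl⟩ := h
      obtain ⟨h1, h2, h3, h4⟩ := hJprops i hiJ
      exact Finset.mem_filter.2 ⟨Finset.mem_Iic.2 (by omega), h3⟩
  have hJne : J.Nonempty := hAne.image φ
  set M := J.max' hJne with hM
  have hMJ : M ∈ J := J.max'_mem hJne
  have hMnot : M ∉ J.image (· - 1) := by
    intro h
    rw [Finset.mem_image] at h
    obtain ⟨i, hiJ, hi⟩ := h
    have h1 := J.le_max' i hiJ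
    have h2 := (hJprops i hiJ).1
    rw [← hM] at h1
    have hi' : i - 1 = M := hi
    omega
  have hins : insert M (J.image (· - 1)) ⊆ K := by
    rw [hK]
    exact Finset.insert_subset (Finset.mem_union_left _ hMJ) Finset.subset_union_right
  have hpredcard : (J.image (· - 1)).card = J.card := Finset.card_image_of_injOn (by
    intro a ha b hb hab
    rw [Finset.mem_coe] at ha hb
    have h1 := (hJprops a ha).1
    have h2 := (hJprops b hb).1
    have hab' : a - 1 = b - 1 := hab
    omega)
  have hfinal : A.card + 1 ≤ B.card :=
    calc A.card + 1 = (insert M (J.image (· - 1))).card := by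
          rw [Finset.card_insert_of_notMem hMnot, hpredcard, hJcard]
      _ ≤ K.card := Finset.card_le_card hins
      _ ≤ B.card := Finset.card_le_card hKB
  omega
end
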